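/- arXiv:0903.2699 — 3 statements merged into one kernel-verified Lean document; each statement's English description precedes it below -/
import Mathlib

section
/- Let N be a positive integer and let (μ_n)_{n≥1} be a strictly increasing sequence of positive real numbers such that |μ_n − (N + 1/2)| < 1/10 for 1 ≤ n ≤ N and μ_n = n for n ≥ N + 1. Then the infinite product s(μ) = π ∏_{n=1}^∞ (μ_n² − μ²)/n², which equals (sin(πμ)/μ) · ∏_{n=1}^N (μ_n² − μ²)/(n² − μ²), defines an entire function of μ; all zeros of s are simple, and (−1)^n s'(μ_n) > 0 for every n ≥ 1. -/
open Real Set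

open Filter Topology
open scoped ComplexOrder

/-!
For `n > N` the factors are `1 - z²/n²`, so the partial products converge locally uniformly
(Weierstrass M-test for products) to an entire function `s`. Comparing with Euler's product for
`sin (π z)` gives, for every `z`, the identity `z · P(z) · s(z) = A(z) · sin (π z)`, where
`A(z) = ∏_{n ≤ N} (μ_n² - z²)/n²` and `P(z) = ∏_{n ≤ N} (n² - z²)/n²`. Since the `μ_k` are
distinct, positive and not integers, `A(z) sin (π z)` has only simple zeros, and at a zero of `s`
its derivative is `z P(z) s'(z)`; so the zeros of `s` are simple. At `x = μ_n` the same identity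
gives `s'(x) = (A · sin (π ·))'(x) / (x P(x))`, whose sign is read off factor by factor.
-/

lemma prod_Icc_one_eq_prod_range {M : Type*} [CommMonoid M] (f : ℕ → M) (m : ℕ) :
    ∏ n ∈ Finset.Icc 1 m, f n = ∏ i ∈ Finset.range m, f (i + 1) := by
  rw [← Finset.Ico_add_one_right_eq_Icc, Finset.prod_Ico_eq_prod_range, Nat.add_sub_cancel]
  exact Finset.prod_congr rfl fun i _ => by rw [add_comm]

section SimpleZeros

variable {𝕜 : Type*} [NontriviallyNormedField 𝕜]

def HasSimpleZeros (f : 𝕜 → 𝕜) : Prop := ∀ z, f z = 0 → deriv f z ≠ 0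

lemma deriv_mul_of_eq_zero_left {f g : 𝕜 → 𝕜} {z : 𝕜} (hf : DifferentiableAt 𝕜 f z)
    (hg : DifferentiableAt 𝕜 g z) (h0 : f z = 0) :
    deriv (fun w => f w * g w) z = deriv f z * g z := by
  rw [deriv_fun_mul hf hg, h0, zero_mul, add_zero]

lemma deriv_mul_of_eq_zero_right {f g : 𝕜 → 𝕜} {z : 𝕜} (hf : DifferentiableAt 𝕜 f z)
    (hg : DifferentiableAt 𝕜 g z) (h0 : g z = 0) :
    deriv (fun w => f w * g w) z = f z * deriv g z := by
  rw [deriv_fun_mul hf hg, h0, mul_zero, zero_add]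

lemma HasSimpleZeros.mul {f g : 𝕜 → 𝕜} (hf : HasSimpleZeros f) (hg : HasSimpleZeros g)
    (hfd : Differentiable 𝕜 f) (hgd : Differentiable 𝕜 g) (hfg : ∀ z, f z = 0 → g z ≠ 0) :
    HasSimpleZeros fun z => f z * g z := by
  intro z hz
  rcases mul_eq_zero.mp hz with h | h
  · rw [deriv_mul_of_eq_zero_left (hfd z) (hgd z) h]
    exact mul_ne_zero (hf z h) (hfg z h)
  · rw [deriv_mul_of_eq_zero_right (hfd z) (hgd z) h]
    exact mul_ne_zero (fun h' => hfg z h' h) (hg z h)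

lemma HasSimpleZeros.finset_prod {ι : Type*} {s : Finset ι} {f : ι → 𝕜 → 𝕜}
    (hf : ∀ i ∈ s, HasSimpleZeros (f i)) (hfd : ∀ i ∈ s, Differentiable 𝕜 (f i))
    (hdisj : ∀ i ∈ s, ∀ j ∈ s, i ≠ j → ∀ z, f i z = 0 → f j z ≠ 0) :
    HasSimpleZeros fun z => ∏ i ∈ s, f i z := by
  classical
  induction s using Finset.induction_on with
  | empty => intro z hz; simp at hz
  | insert a s ha ih =>
    simp only [Finset.prod_insert ha]
    refine (hf a (s.mem_insert_self a)).mul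
      (ih (fun i hi => hf i (Finset.mem_insert_of_mem hi))
        (fun i hi => hfd i (Finset.mem_insert_of_mem hi))
        fun i hi j hj => hdisj i (Finset.mem_insert_of_mem hi) j (Finset.mem_insert_of_mem hj))
      (hfd a (s.mem_insert_self a))
      (Differentiable.fun_finsetProd fun i hi => hfd i (Finset.mem_insert_of_mem hi)) ?_
    intro z hz
    refine Finset.prod_ne_zero_iff.mpr fun j hj => ?_
    exact hdisj a (s.mem_insert_self a) j (Finset.mem_insert_of_mem hj)
      (fun h => ha (h ▸ hj)) z hz

lemma HasSimpleZeros.of_mul_eq {f g h : 𝕜 → 𝕜} (hh : HasSimpleZeros h)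
    (hfgh : ∀ z, f z * g z = h z) (hf : Differentiable 𝕜 f) (hg : Differentiable 𝕜 g) :
    HasSimpleZeros g := by
  intro z hz
  have hdh := hh z (by rw [← hfgh, hz, mul_zero])
  rw [← funext hfgh, deriv_mul_of_eq_zero_right (hf z) (hg z) hz] at hdh
  exact right_ne_zero_of_mul hdh

end SimpleZeros

lemma hasDerivAt_sin_pi_mul (z : ℂ) :
    HasDerivAt (fun w : ℂ => Complex.sin (π * w)) (π * Complex.cos (π * z)) z := by
  have := (Complex.hasDerivAt_sin (π * z)).comp z ((hasDerivAt_id z).const_mul (π : ℂ))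
  simpa [Function.comp_def, mul_comm] using this

lemma hasSimpleZeros_sin_pi_mul : HasSimpleZeros fun z : ℂ => Complex.sin (π * z) := by
  intro z hz
  rw [(hasDerivAt_sin_pi_mul z).deriv]
  have hcos : Complex.cos (π * z) ^ 2 = 1 := by
    linear_combination Complex.sin_sq_add_cos_sq (π * z) - hz * Complex.sin (π * z)
  exact mul_ne_zero (Complex.ofReal_ne_zero.mpr pi_ne_zero) (fun h => by simp [h] at hcos)

lemma neg_one_pow_mul_sin_pi_mul_pos {N : ℕ} {x : ℝ} (h1 : N < x) (h2 : x < N + 1) :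
    0 < (-1) ^ N * Complex.sin (π * x) := by
  have hpos : 0 < Real.sin (π * (x - N)) :=
    Real.sin_pos_of_pos_of_lt_pi (mul_pos pi_pos (by linarith)) (by nlinarith [pi_pos])
  have hsign : (-1) ^ N * Real.sin (π * x) = Real.sin (π * (x - N)) := by
    rw [show π * x = π * (x - N) + N * π by ring, Real.sin_add_nat_mul_pi, ← mul_assoc,
      ← mul_pow]
    norm_num
  exact_mod_cast hsign ▸ hpos

namespace PerturbedSine

noncomputable def factor (μ : ℕ → ℝ) (n : ℕ) (z : ℂ) : ℂ := ((μ n : ℂ) ^ 2 - z ^ 2) / (n : ℂ) ^ 2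

noncomputable def partialProd (μ : ℕ → ℝ) (m : ℕ) (z : ℂ) : ℂ :=
  π * ∏ n ∈ Finset.Icc 1 m, factor μ n z

noncomputable def sineProd (μ : ℕ → ℝ) (z : ℂ) : ℂ := π * ∏' n : ℕ, factor μ (n + 1) z

noncomputable def headProd (μ : ℕ → ℝ) (N : ℕ) (z : ℂ) : ℂ := ∏ n ∈ Finset.Icc 1 N, factor μ n z

variable {μ : ℕ → ℝ} {N : ℕ}

lemma factor_of_eq_natCast {n : ℕ} (hμ : μ n = n) (hn : n ≠ 0) (z : ℂ) :
    factor μ n z = 1 + -z ^ 2 / (n : ℂ) ^ 2 := by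
  have : (n : ℂ) ≠ 0 := Nat.cast_ne_zero.mpr hn
  rw [factor, hμ]
  push_cast
  field_simp
  ring

lemma factor_eq_zero_iff {n : ℕ} (hn : n ≠ 0) {z : ℂ} :
    factor μ n z = 0 ↔ z ^ 2 = (μ n : ℂ) ^ 2 := by
  rw [factor, div_eq_zero_iff, sub_eq_zero, eq_comm]
  simp [hn]

lemma hasDerivAt_factor (n : ℕ) (z : ℂ) : HasDerivAt (factor μ n) (-2 * z / (n : ℂ) ^ 2) z := by
  change HasDerivAt (fun w : ℂ => ((μ n : ℂ) ^ 2 - w ^ 2) / (n : ℂ) ^ 2) _ z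
  simpa using ((hasDerivAt_pow 2 z).const_sub ((μ n : ℂ) ^ 2)).div_const ((n : ℂ) ^ 2)

lemma differentiable_factor (n : ℕ) : Differentiable ℂ (factor μ n) := by
  unfold factor; fun_prop

lemma differentiable_headProd : Differentiable ℂ (headProd μ N) :=
  Differentiable.fun_finsetProd fun n _ => differentiable_factor n

lemma tendstoUniformlyOn_partialProd (htail : ∀ n, N + 1 ≤ n → μ n = n) {K : Set ℂ}
    (hK : IsCompact K) : TendstoUniformlyOn (partialProd μ) (sineProd μ) atTop K := by
  obtain ⟨R, hR⟩ := hK.isBounded.subset_closedBall 0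
  have hu : Summable fun n : ℕ => R ^ 2 / ((n : ℝ) + 1) ^ 2 := by
    have := (summable_nat_add_iff 1).mpr (Real.summable_one_div_nat_pow.mpr one_lt_two)
    simpa [div_eq_mul_one_div (R ^ 2)] using this.mul_left (R ^ 2)
  have hbound : ∀ᶠ n in atTop, ∀ z ∈ K,
      ‖factor μ (n + 1) z - 1‖ ≤ R ^ 2 / ((n : ℝ) + 1) ^ 2 := by
    filter_upwards [eventually_ge_atTop N] with n hn z hz
    have hzR : ‖z‖ ≤ R := by simpa using hR hz
    rw [factor_of_eq_natCast (htail (n + 1) (by omega)) n.succ_ne_zero, add_sub_cancel_left,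
      norm_div, norm_neg, norm_pow, norm_pow]
    push_cast
    rw [← Nat.cast_succ, Complex.norm_natCast, Nat.cast_succ]
    gcongr
  have hprod := (Summable.hasProdUniformlyOn_nat_one_add hK hu hbound
    fun n => (differentiable_factor (n + 1)).continuous.continuousOn.sub continuousOn_const)
    |>.tendstoUniformlyOn_finsetRange
  simp only [add_sub_cancel] at hprod
  refine ((uniformContinuous_const_smul (π : ℂ)).comp_tendstoUniformlyOn hprod).congr ?_
  filter_upwards with m z _
  simp [partialProd, prod_Icc_one_eq_prod_range]

lemma tendstoLocallyUniformly_partialProd (htail : ∀ n, N + 1 ≤ n → μ n = n) :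
    TendstoLocallyUniformly (partialProd μ) (sineProd μ) atTop :=
  tendstoLocallyUniformly_iff_forall_isCompact.mpr fun _ hK =>
    tendstoUniformlyOn_partialProd htail hK

lemma tendsto_partialProd (htail : ∀ n, N + 1 ≤ n → μ n = n) (z : ℂ) :
    Tendsto (fun m => partialProd μ m z) atTop (𝓝 (sineProd μ z)) :=
  (tendstoUniformlyOn_partialProd htail isCompact_singleton).tendsto_at rfl

lemma differentiable_sineProd (htail : ∀ n, N + 1 ≤ n → μ n = n) :
    Differentiable ℂ (sineProd μ) := by
  rw [← differentiableOn_univ]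
  refine (tendstoLocallyUniformly_partialProd htail).tendstoLocallyUniformlyOn.differentiableOn
    (Eventually.of_forall fun m => Differentiable.differentiableOn ?_) isOpen_univ
  exact (Differentiable.fun_finsetProd fun n _ => differentiable_factor n).const_mul _

lemma partialProd_mul_headProd (htail : ∀ n, N + 1 ≤ n → μ n = n) {m : ℕ} (hm : N ≤ m)
    (z : ℂ) : partialProd μ m z * headProd (↑) N z = headProd μ N z * partialProd (↑) m z := by
  have hsplit : ∀ f : ℕ → ℂ, ∏ n ∈ Finset.Icc 1 m, f n =
      (∏ n ∈ Finset.Icc 1 N, f n) * ∏ n ∈ Finset.Ioc N m, f n := fun f => by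
    have hIoc : ∀ k, Finset.Icc 1 k = Finset.Ioc 0 k := Finset.Icc_add_one_left_eq_Ioc 0
    rw [hIoc, hIoc]
    exact (Finset.prod_Ioc_consecutive f (Nat.zero_le N) hm).symm
  have htail' : ∏ n ∈ Finset.Ioc N m, factor μ n z = ∏ n ∈ Finset.Ioc N m, factor (↑) n z :=
    Finset.prod_congr rfl fun n hn => by
      rw [factor, factor, htail n (Finset.mem_Ioc.mp hn).1]
  simp only [partialProd, headProd, hsplit, htail']
  ring

lemma tendsto_mul_partialProd_natCast (z : ℂ) :
    Tendsto (fun m => z * partialProd (↑) m z) atTop (𝓝 (Complex.sin (π * z))) := by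
  refine (Complex.tendsto_euler_sin_prod z).congr fun m => ?_
  rw [partialProd, prod_Icc_one_eq_prod_range, mul_left_comm, ← mul_assoc]
  congr 1
  refine Finset.prod_congr rfl fun j _ => ?_
  rw [factor_of_eq_natCast rfl j.succ_ne_zero]
  push_cast
  ring

lemma mul_headProd_mul_sineProd (htail : ∀ n, N + 1 ≤ n → μ n = n) (z : ℂ) :
    z * headProd (↑) N z * sineProd μ z = headProd μ N z * Complex.sin (π * z) := by
  refine tendsto_nhds_unique ((tendsto_partialProd htail z).const_mul (z * headProd (↑) N z))
    (((tendsto_mul_partialProd_natCast z).const_mul (headProd μ N z)).congr' ?_)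
  filter_upwards [eventually_ge_atTop N] with m hm
  linear_combination (-z) * partialProd_mul_headProd htail hm z

lemma hasSimpleZeros_factor {n : ℕ} (hn : n ≠ 0) (hμ : μ n ≠ 0) :
    HasSimpleZeros (factor μ n) := by
  intro z hz
  have hz0 : z ≠ 0 := by
    rintro rfl
    rw [factor_eq_zero_iff hn, zero_pow two_ne_zero] at hz
    exact hμ (by exact_mod_cast (pow_eq_zero_iff two_ne_zero).mp hz.symm)
  rw [(hasDerivAt_factor n z).deriv]
  exact div_ne_zero (mul_ne_zero (by norm_num) hz0) (by simp [hn])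

lemma hasSimpleZeros_headProd (hpos : ∀ k ∈ Finset.Icc 1 N, 0 < μ k)
    (hinj : Set.InjOn μ (Set.Icc 1 N)) : HasSimpleZeros (headProd μ N) := by
  refine HasSimpleZeros.finset_prod
    (fun k hk => hasSimpleZeros_factor (by simp at hk; omega) (hpos k hk).ne')
    (fun k _ => differentiable_factor k) fun i hi j hj hij z hzi hzj =>
      hij (hinj (by simpa using hi) (by simpa using hj) ?_)
  rw [factor_eq_zero_iff (by simp at hi; omega)] at hzi
  rw [factor_eq_zero_iff (by simp at hj; omega), hzi] at hzj
  exact (pow_left_inj₀ (hpos i hi).le (hpos j hj).le two_ne_zero).mp (by exact_mod_cast hzj)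

lemma sin_pi_mul_ne_zero_of_headProd_eq_zero (hnint : ∀ k ∈ Finset.Icc 1 N, ∀ m : ℤ, μ k ≠ m)
    {z : ℂ} (hz : headProd μ N z = 0) : Complex.sin (π * z) ≠ 0 := by
  obtain ⟨k, hk, hzk⟩ := Finset.prod_eq_zero_iff.mp hz
  rw [factor_eq_zero_iff (by simp at hk; omega)] at hzk
  intro hsin
  obtain ⟨m, hm⟩ := Complex.sin_eq_zero_iff.mp hsin
  have hzm : z = m := mul_left_cancel₀ (Complex.ofReal_ne_zero.mpr pi_ne_zero) (by rw [hm]; ring)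
  rw [hzm] at hzk
  have hsq : (m : ℝ) ^ 2 = μ k ^ 2 := by exact_mod_cast hzk
  rcases sq_eq_sq_iff_eq_or_eq_neg.mp hsq with h | h
  · exact hnint k hk m h.symm
  · exact hnint k hk (-m) (by push_cast; linarith)

lemma hasSimpleZeros_sineProd (htail : ∀ n, N + 1 ≤ n → μ n = n)
    (hpos : ∀ k ∈ Finset.Icc 1 N, 0 < μ k) (hinj : Set.InjOn μ (Set.Icc 1 N))
    (hnint : ∀ k ∈ Finset.Icc 1 N, ∀ m : ℤ, μ k ≠ m) : HasSimpleZeros (sineProd μ) :=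
  ((hasSimpleZeros_headProd hpos hinj).mul hasSimpleZeros_sin_pi_mul differentiable_headProd
    (by fun_prop) fun _ hz => sin_pi_mul_ne_zero_of_headProd_eq_zero hnint hz).of_mul_eq
    (mul_headProd_mul_sineProd htail) (differentiable_id.mul differentiable_headProd)
    (differentiable_sineProd htail)

lemma headProd_natCast_ne_zero {z : ℂ} (hz : ∀ n, 1 ≤ n → n ≤ N → z ^ 2 ≠ (n : ℂ) ^ 2) :
    headProd (↑) N z ≠ 0 :=
  Finset.prod_ne_zero_iff.mpr fun n hn => by
    obtain ⟨h1, h2⟩ := Finset.mem_Icc.mp hn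
    rw [ne_eq, factor_eq_zero_iff (by omega), Complex.ofReal_natCast]
    exact hz n h1 h2

lemma sineProd_eq (htail : ∀ n, N + 1 ≤ n → μ n = n) {z : ℂ}
    (hz : ∀ n, 1 ≤ n → n ≤ N → z ^ 2 ≠ (n : ℂ) ^ 2) :
    sineProd μ z = (if z = 0 then (π : ℂ) else Complex.sin (π * z) / z) *
      ∏ n ∈ Finset.Icc 1 N, (((μ n : ℂ) ^ 2 - z ^ 2) / ((n : ℂ) ^ 2 - z ^ 2)) := by
  have hP := headProd_natCast_ne_zero hz
  have hquot : ∏ n ∈ Finset.Icc 1 N, (((μ n : ℂ) ^ 2 - z ^ 2) / ((n : ℂ) ^ 2 - z ^ 2)) =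
      headProd μ N z / headProd (↑) N z := by
    rw [headProd, headProd, ← Finset.prod_div_distrib]
    refine Finset.prod_congr rfl fun n hn => ?_
    obtain ⟨h1, h2⟩ := Finset.mem_Icc.mp hn
    have hn0 : (n : ℂ) ≠ 0 := Nat.cast_ne_zero.mpr (by omega)
    have hnz : (n : ℂ) ^ 2 - z ^ 2 ≠ 0 := sub_ne_zero.mpr (hz n h1 h2).symm
    simp only [factor, Complex.ofReal_natCast]
    field_simp
  have hid := mul_headProd_mul_sineProd htail (μ := μ)
  rw [hquot]
  split_ifs with h0
  · subst h0
    -- both sides of the identity vanish at `0`; their derivatives there give `P 0 * s 0 = π * A 0`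
    have hderiv := congrArg (deriv · 0) (funext hid)
    rw [deriv_mul_of_eq_zero_left (f := fun z => z * headProd (↑) N z)
        (differentiableAt_id.mul (differentiable_headProd 0))
        (differentiable_sineProd htail 0) (by simp),
      deriv_mul_of_eq_zero_left (f := fun z => z) (by fun_prop) (differentiable_headProd 0) rfl,
      deriv_mul_of_eq_zero_right (differentiable_headProd 0) (by fun_prop) (by simp),
      (hasDerivAt_sin_pi_mul 0).deriv, deriv_id''] at hderiv
    field_simp
    simpa [mul_comm] using hderiv
  · field_simp
    linear_combination hid z

lemma deriv_sineProd_eq_div (htail : ∀ n, N + 1 ≤ n → μ n = n) {x : ℂ}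
    (hR : headProd μ N x * Complex.sin (π * x) = 0) (hQ : x * headProd (↑) N x ≠ 0) :
    deriv (sineProd μ) x =
      deriv (fun z => headProd μ N z * Complex.sin (π * z)) x / (x * headProd (↑) N x) := by
  have hs : sineProd μ x = 0 :=
    (mul_eq_zero.mp ((mul_headProd_mul_sineProd htail x).trans hR)).resolve_left hQ
  rw [← funext (mul_headProd_mul_sineProd htail),
    deriv_mul_of_eq_zero_right (f := fun z => z * headProd (↑) N z)
      (differentiableAt_id.mul (differentiable_headProd x)) (differentiable_sineProd htail x) hs,
    mul_div_cancel_left₀ _ hQ]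

lemma factor_ofReal (n : ℕ) (x : ℝ) :
    factor μ n x = (((μ n) ^ 2 - x ^ 2) / (n : ℝ) ^ 2 : ℝ) := by
  push_cast; rfl

lemma factor_ofReal_pos {n : ℕ} (hn : n ≠ 0) {x : ℝ} (h : x ^ 2 < μ n ^ 2) :
    0 < factor μ n x := by
  rw [factor_ofReal]
  exact_mod_cast div_pos (sub_pos.mpr h) (by positivity)

lemma neg_factor_ofReal_pos {n : ℕ} (hn : n ≠ 0) {x : ℝ} (h : μ n ^ 2 < x ^ 2) :
    0 < -factor μ n x := by
  rw [factor_ofReal, ← Complex.ofReal_neg, ← neg_div, neg_sub]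
  exact_mod_cast div_pos (sub_pos.mpr h) (by positivity)

lemma neg_one_pow_mul_headProd_pos {x : ℝ} (h : ∀ j ∈ Finset.Icc 1 N, μ j ^ 2 < x ^ 2) :
    0 < (-1) ^ N * headProd μ N x := by
  have hneg := Finset.prod_neg (s := Finset.Icc 1 N) (fun j => factor μ j x)
  rw [Nat.card_Icc, Nat.add_sub_cancel] at hneg
  rw [headProd, ← hneg]
  exact Finset.prod_pos fun j hj => neg_factor_ofReal_pos (by simp at hj; omega) (h j hj)

lemma deriv_headProd_apply {k : ℕ} (hk : k ∈ Finset.Icc 1 N) :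
    deriv (headProd μ N) (μ k) =
      -2 * μ k / (k : ℂ) ^ 2 * ∏ j ∈ (Finset.Icc 1 N).erase k, factor μ j (μ k) := by
  have hsplit : headProd μ N =
      fun z => factor μ k z * ∏ j ∈ (Finset.Icc 1 N).erase k, factor μ j z :=
    funext fun z => (Finset.mul_prod_erase _ (fun j => factor μ j z) hk).symm
  rw [hsplit, deriv_mul_of_eq_zero_left (differentiable_factor k _)
    (Differentiable.fun_finsetProd (fun j _ => differentiable_factor j) _)
    ((factor_eq_zero_iff (by simp at hk; omega)).mpr rfl), (hasDerivAt_factor k _).deriv]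

lemma neg_one_pow_mul_deriv_headProd_pos (hpos : ∀ j ∈ Finset.Icc 1 N, 0 < μ j)
    (hmono : StrictMonoOn μ (Set.Icc 1 N)) {k : ℕ} (hk : k ∈ Finset.Icc 1 N) :
    0 < (-1) ^ k * deriv (headProd μ N) (μ k) := by
  obtain ⟨hk1, hkN⟩ := Finset.mem_Icc.mp hk
  obtain ⟨k, rfl⟩ : ∃ k', k = k' + 1 := ⟨k - 1, by omega⟩
  have hsq : ∀ i ∈ Finset.Icc 1 N, ∀ j ∈ Finset.Icc 1 N, i < j → μ i ^ 2 < μ j ^ 2 :=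
    fun i hi j hj hij => pow_lt_pow_left₀ (hmono (by simpa using hi) (by simpa using hj) hij)
      (hpos i hi).le two_ne_zero
  have herase : (Finset.Icc 1 N).erase (k + 1) =
      Finset.Ico 1 (k + 1) ∪ Finset.Ioc (k + 1) N := by
    ext j
    simp only [Finset.mem_erase, Finset.mem_Icc, Finset.mem_union, Finset.mem_Ico,
      Finset.mem_Ioc]
    omega
  have hdisj : Disjoint (Finset.Ico 1 (k + 1)) (Finset.Ioc (k + 1) N) :=
    Finset.disjoint_left.mpr fun j h1 h2 => by simp at h1 h2; omega
  have hlow : 0 < ∏ j ∈ Finset.Ico 1 (k + 1), -factor μ j (μ (k + 1)) :=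
    Finset.prod_pos fun j hj => by
      simp only [Finset.mem_Ico] at hj
      exact neg_factor_ofReal_pos (by omega)
        (hsq j (Finset.mem_Icc.mpr ⟨hj.1, by omega⟩) _ hk hj.2)
  have hhigh : 0 < ∏ j ∈ Finset.Ioc (k + 1) N, factor μ j (μ (k + 1)) :=
    Finset.prod_pos fun j hj => by
      simp only [Finset.mem_Ioc] at hj
      exact factor_ofReal_pos (by omega) (hsq _ hk j (Finset.mem_Icc.mpr ⟨by omega, hj.2⟩) hj.1)
  have hcoef : (0 : ℂ) < 2 * μ (k + 1) / ((k + 1 : ℕ) : ℂ) ^ 2 := by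
    have := hpos _ hk
    exact_mod_cast (by positivity : (0 : ℝ) < 2 * μ (k + 1) / ((k + 1 : ℕ) : ℝ) ^ 2)
  have hcard : (Finset.Ico 1 (k + 1)).card = k := by simp
  rw [Finset.prod_neg, hcard] at hlow
  rw [deriv_headProd_apply hk, herase, Finset.prod_union hdisj]
  convert mul_pos (mul_pos hcoef hlow) hhigh using 1
  rw [pow_succ]
  ring

lemma neg_one_pow_mul_deriv_sineProd_pos_of_le (htail : ∀ n, N + 1 ≤ n → μ n = n)
    (hμ : ∀ j ∈ Finset.Icc 1 N, N < μ j ∧ μ j < N + 1) (hmono : StrictMonoOn μ (Set.Icc 1 N))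
    {k : ℕ} (hk : k ∈ Finset.Icc 1 N) : 0 < (-1) ^ k * deriv (sineProd μ) (μ k) := by
  have hpos : ∀ j ∈ Finset.Icc 1 N, 0 < μ j := fun j hj =>
    (Nat.cast_nonneg N).trans_lt (hμ j hj).1
  have hA : headProd μ N (μ k) = 0 :=
    Finset.prod_eq_zero hk ((factor_eq_zero_iff (by simp at hk; omega)).mpr rfl)
  have hP : 0 < (-1) ^ N * headProd (↑) N (μ k) := neg_one_pow_mul_headProd_pos fun j hj => by
    have : (j : ℝ) ≤ N := by exact_mod_cast (Finset.mem_Icc.mp hj).2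
    nlinarith [(hμ k hk).1]
  have hPne : headProd (↑) N (μ k) ≠ 0 := fun h => hP.ne' (by rw [h, mul_zero])
  have hx : (0 : ℂ) < μ k := by exact_mod_cast hpos k hk
  rw [deriv_sineProd_eq_div htail (by rw [hA, zero_mul]) (mul_ne_zero hx.ne' hPne),
    deriv_mul_of_eq_zero_left (differentiable_headProd _) (by fun_prop) hA]
  convert div_pos (mul_pos (neg_one_pow_mul_deriv_headProd_pos hpos hmono hk)
    (neg_one_pow_mul_sin_pi_mul_pos (hμ k hk).1 (hμ k hk).2)) (mul_pos hx hP) using 1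
  rw [← mul_div_assoc, div_eq_div_iff (mul_ne_zero hx.ne' hPne) (mul_pos hx hP).ne']
  ring

lemma neg_one_pow_mul_deriv_sineProd_pos_of_lt (htail : ∀ n, N + 1 ≤ n → μ n = n)
    (hμ : ∀ j ∈ Finset.Icc 1 N, 0 < μ j ∧ μ j < N + 1) {n : ℕ} (hn : N < n) :
    0 < (-1) ^ n * deriv (sineProd μ) (μ n) := by
  rw [htail n hn]
  have hn' : (N : ℝ) + 1 ≤ n := by exact_mod_cast hn
  have hA : 0 < (-1) ^ N * headProd μ N ((n : ℝ) : ℂ) :=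
    neg_one_pow_mul_headProd_pos fun j hj => by nlinarith [hμ j hj]
  have hP : 0 < (-1) ^ N * headProd (↑) N ((n : ℝ) : ℂ) :=
    neg_one_pow_mul_headProd_pos fun j hj => by
      have : (j : ℝ) ≤ N := by exact_mod_cast (Finset.mem_Icc.mp hj).2
      nlinarith
  have hPne : headProd (↑) N ((n : ℝ) : ℂ) ≠ 0 := fun h => hP.ne' (by rw [h, mul_zero])
  have hx : (0 : ℂ) < ((n : ℝ) : ℂ) := by exact_mod_cast (by linarith : (0 : ℝ) < n)
  have hsin : Complex.sin (π * ((n : ℝ) : ℂ)) = 0 := by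
    simpa [mul_comm] using Complex.sin_nat_mul_pi n
  have hcos : Complex.cos (π * ((n : ℝ) : ℂ)) = (-1) ^ n := by
    exact_mod_cast (mul_comm π n ▸ Real.cos_nat_mul_pi n)
  have hsq : ((-1 : ℂ) ^ n) ^ 2 = 1 := by rw [← pow_mul, mul_comm, pow_mul, neg_one_sq, one_pow]
  rw [deriv_sineProd_eq_div htail (by rw [hsin, mul_zero]) (mul_ne_zero hx.ne' hPne),
    deriv_mul_of_eq_zero_right (g := fun z => Complex.sin (π * z)) (differentiable_headProd _)
      (by fun_prop) hsin,
    (hasDerivAt_sin_pi_mul _).deriv, hcos]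
  convert div_pos (mul_pos (by exact_mod_cast pi_pos : (0 : ℂ) < π) hA) (mul_pos hx hP) using 1
  rw [← mul_div_assoc, div_eq_div_iff (mul_ne_zero hx.ne' hPne) (mul_pos hx hP).ne']
  linear_combination (π : ℂ) * headProd μ N ((n : ℝ) : ℂ) * ((n : ℝ) : ℂ) *
    headProd (↑) N ((n : ℝ) : ℂ) * (-1) ^ N * hsq

lemma exists_pos_eq_neg_one_pow_mul_deriv_sineProd (htail : ∀ n, N + 1 ≤ n → μ n = n)
    (hμ : ∀ j ∈ Finset.Icc 1 N, N < μ j ∧ μ j < N + 1) (hmono : StrictMonoOn μ (Set.Icc 1 N))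
    {n : ℕ} (hn : 1 ≤ n) : ∃ t : ℝ, 0 < t ∧ (-1) ^ n * deriv (sineProd μ) (μ n) = t := by
  have hsign : 0 < (-1) ^ n * deriv (sineProd μ) (μ n) := by
    by_cases hnN : n ≤ N
    · exact neg_one_pow_mul_deriv_sineProd_pos_of_le htail hμ hmono
        (Finset.mem_Icc.mpr ⟨hn, hnN⟩)
    · exact neg_one_pow_mul_deriv_sineProd_pos_of_lt htail
        (fun j hj => ⟨(Nat.cast_nonneg N).trans_lt (hμ j hj).1, (hμ j hj).2⟩) (by omega)
  obtain ⟨t, ht, hteq⟩ := RCLike.pos_iff_exists_ofReal.mp hsign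
  exact ⟨t, ht, hteq.symm⟩

end PerturbedSine

open PerturbedSine in
theorem stmt6_general (N : ℕ) (μ : ℕ → ℝ)
    (hmono : ∀ m n : ℕ, 1 ≤ m → m < n → μ m < μ n)
    (hsmall : ∀ n : ℕ, 1 ≤ n → n ≤ N → |μ n - (N + 1 / 2)| < 1 / 10)
    (htail : ∀ n : ℕ, N + 1 ≤ n → μ n = n) :
    ∃ s : ℂ → ℂ, Differentiable ℂ s ∧
      -- the partial products of `π ∏ (μ_n² − μ²)/n²` converge locally uniformly to `s`
      TendstoLocallyUniformly
        (fun m : ℕ => fun z : ℂ =>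
          (π : ℂ) * ∏ n ∈ Finset.Icc 1 m, (((μ n : ℂ) ^ 2 - z ^ 2) / (n : ℂ) ^ 2))
        s Filter.atTop ∧
      -- `s` equals `(sin(πμ)/μ) ∏_{n=1}^N (μ_n² − μ²)/(n² − μ²)` (removable singularity filled)
      (∀ z : ℂ, (∀ n : ℕ, 1 ≤ n → n ≤ N → z ^ 2 ≠ (n : ℂ) ^ 2) →
        s z = (if z = 0 then (π : ℂ) else Complex.sin ((π : ℂ) * z) / z) *
          ∏ n ∈ Finset.Icc 1 N, (((μ n : ℂ) ^ 2 - z ^ 2) / ((n : ℂ) ^ 2 - z ^ 2))) ∧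
      -- all zeros of `s` are simple
      (∀ z : ℂ, s z = 0 → deriv s z ≠ 0) ∧
      -- `(−1)^n s'(μ_n) > 0` for every `n ≥ 1`
      (∀ n : ℕ, 1 ≤ n → ∃ t : ℝ, 0 < t ∧
        (-1 : ℂ) ^ n * deriv s ((μ n : ℂ)) = (t : ℂ)) := by
  have hμ : ∀ k ∈ Finset.Icc 1 N, (N : ℝ) < μ k ∧ μ k < N + 1 := fun k hk => by
    obtain ⟨hk1, hkN⟩ := Finset.mem_Icc.mp hk
    obtain ⟨h1, h2⟩ := abs_lt.mp (hsmall k hk1 hkN)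
    constructor <;> linarith
  have hmono' : StrictMonoOn μ (Set.Icc 1 N) := fun i hi j _ hij => hmono i j hi.1 hij
  have hnint : ∀ k ∈ Finset.Icc 1 N, ∀ m : ℤ, μ k ≠ m := fun k hk m hm => by
    have h1 : (N : ℤ) < m := by exact_mod_cast hm ▸ (hμ k hk).1
    have h2 : m < (N : ℤ) + 1 := by exact_mod_cast hm ▸ (hμ k hk).2
    omega
  refine ⟨sineProd μ, differentiable_sineProd htail, tendstoLocallyUniformly_partialProd htail,
    fun z hz => sineProd_eq htail hz,
    hasSimpleZeros_sineProd htail (fun k hk => (Nat.cast_nonneg N).trans_lt (hμ k hk).1)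
      hmono'.injOn hnint,
    fun n hn => exists_pos_eq_neg_one_pow_mul_deriv_sineProd htail hμ hmono' hn⟩

theorem stmt6 (N : ℕ) (hN : 1 ≤ N) (μ : ℕ → ℝ)
    (hpos : ∀ n : ℕ, 1 ≤ n → 0 < μ n)
    (hmono : ∀ m n : ℕ, 1 ≤ m → m < n → μ m < μ n)
    (hsmall : ∀ n : ℕ, 1 ≤ n → n ≤ N → |μ n - (N + 1 / 2)| < 1 / 10)
    (htail : ∀ n : ℕ, N + 1 ≤ n → μ n = n) :
    ∃ s : ℂ → ℂ, Differentiable ℂ s ∧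
      -- the partial products of `π ∏ (μ_n² − μ²)/n²` converge locally uniformly to `s`
      TendstoLocallyUniformly
        (fun m : ℕ => fun z : ℂ =>
          (π : ℂ) * ∏ n ∈ Finset.Icc 1 m, (((μ n : ℂ) ^ 2 - z ^ 2) / (n : ℂ) ^ 2))
        s Filter.atTop ∧
      -- `s` equals `(sin(πμ)/μ) ∏_{n=1}^N (μ_n² − μ²)/(n² − μ²)` (removable singularity filled)
      (∀ z : ℂ, (∀ n : ℕ, 1 ≤ n → n ≤ N → z ^ 2 ≠ (n : ℂ) ^ 2) →
        s z = (if z = 0 then (π : ℂ) else Complex.sin ((π : ℂ) * z) / z) *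
          ∏ n ∈ Finset.Icc 1 N, (((μ n : ℂ) ^ 2 - z ^ 2) / ((n : ℂ) ^ 2 - z ^ 2))) ∧
      -- all zeros of `s` are simple
      (∀ z : ℂ, s z = 0 → deriv s z ≠ 0) ∧
      -- `(−1)^n s'(μ_n) > 0` for every `n ≥ 1`
      (∀ n : ℕ, 1 ≤ n → ∃ t : ℝ, 0 < t ∧
        (-1 : ℂ) ^ n * deriv s ((μ n : ℂ)) = (t : ℂ)) :=
  stmt6_general N μ hmono hsmall htail
end

section
/- Let N be a positive integer and let (μ_n)_{n≥1} be a strictly increasing sequence of positive real numbers such that |μ_n − (N + 1/2)| < 1/10 for 1 ≤ n ≤ N and μ_n = n for n ≥ N + 1, and let s(μ) = π ∏_{n=1}^∞ (μ_n² − μ²)/n². Then there exist constants C₃ > 0 and C₄ > 0 such that |μ s(μ)| ≥ C₃ e^{π|Im μ|} whenever |Im μ| ≥ 1, and |μ s(μ)| ≥ C₄ for all μ in the set H, the union over integers m ≥ N + 1 of the vertical segments { z ∈ ℂ : |Re z| = m + 1/2, |Im z| ≤ 1 }. -/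
/-!
For `n > N` the factors of `s` are those of Euler's product for `sin (π z) / (π z)`, so
`z s(z) = sin (π z) ∏_{n ≤ N} (μ_n² - z²) / (n² - z²)`. Since `μ_n²` and `n²` differ by a fixed
amount, each of these finitely many factors is bounded below as soon as `t² - z² = (t - z)(t + z)`
stays away from `0` for all real `|t| ≤ N + 3/5`; this holds when `|Im z| ≥ 1`, and on `H` because
there `|Re z| ≥ N + 3/2`. It remains to use `|sin w|² = sin² (Re w) + sinh² (Im w)`.
-/

open Real Set
open Filter Topology

theorem Complex.normSq_sin (w : ℂ) :
    Complex.normSq (Complex.sin w) = Real.sin w.re ^ 2 + Real.sinh w.im ^ 2 := by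
  rw [Complex.sin_eq, Complex.normSq_apply]
  simp only [← Complex.ofReal_sin, ← Complex.ofReal_cos, ← Complex.ofReal_cosh,
    ← Complex.ofReal_sinh, Complex.add_re, Complex.add_im, Complex.mul_re, Complex.mul_im,
    Complex.ofReal_re, Complex.ofReal_im, Complex.I_re, Complex.I_im]
  linear_combination Real.sin w.re ^ 2 * Real.cosh_sq w.im
    + Real.sinh w.im ^ 2 * Real.cos_sq_add_sin_sq w.re

theorem Complex.abs_sin_re_le_norm_sin (w : ℂ) : |Real.sin w.re| ≤ ‖Complex.sin w‖ := by
  rw [← abs_norm, ← sq_le_sq, Complex.sq_norm, Complex.normSq_sin]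
  nlinarith [sq_nonneg (Real.sinh w.im)]

theorem Complex.abs_sinh_im_le_norm_sin (w : ℂ) : |Real.sinh w.im| ≤ ‖Complex.sin w‖ := by
  rw [← abs_norm, ← sq_le_sq, Complex.sq_norm, Complex.normSq_sin]
  nlinarith [sq_nonneg (Real.sin w.re)]

theorem abs_sin_pi_mul_of_abs_eq (m : ℕ) {x : ℝ} (hx : |x| = m + 1 / 2) :
    |Real.sin (π * x)| = 1 := by
  have hcos : Real.cos (π * x) = 0 := by
    rw [Real.cos_eq_zero_iff]
    rcases abs_choice x with h | h
    · exact ⟨m, by rw [← h, hx]; push_cast; ring⟩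
    · exact ⟨-(m : ℤ) - 1, by rw [show x = -|x| by linarith, hx]; push_cast; ring⟩
  have := Real.sin_sq_add_cos_sq (π * x)
  rw [hcos] at this
  rw [← abs_one, ← sq_eq_sq_iff_abs_eq_abs]; linarith

theorem one_sub_exp_mul_exp_le_norm_sin_pi_mul {z : ℂ} (hz : 1 ≤ |z.im|) :
    (1 - Real.exp (-(2 * π))) / 2 * Real.exp (π * |z.im|) ≤ ‖Complex.sin (π * z)‖ := by
  have him : ((π : ℂ) * z).im = π * z.im := by simp
  have hsinh := Complex.abs_sinh_im_le_norm_sin (π * z)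
  rw [him, Real.abs_sinh, abs_mul, abs_of_pos Real.pi_pos, Real.sinh_eq] at hsinh
  have hexp : Real.exp (-(π * |z.im|)) ≤ Real.exp (-(2 * π)) * Real.exp (π * |z.im|) := by
    rw [← Real.exp_add]; gcongr; nlinarith [Real.pi_pos]
  nlinarith

theorem sq_im_le_norm_sq_sub_sq (t : ℝ) (z : ℂ) : z.im ^ 2 ≤ ‖(t : ℂ) ^ 2 - z ^ 2‖ := by
  have hfac : (t : ℂ) ^ 2 - z ^ 2 = (t - z) * (t + z) := by ring
  have h₁ : |z.im| ≤ ‖(t : ℂ) - z‖ := by simpa using Complex.abs_im_le_norm ((t : ℂ) - z)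
  have h₂ : |z.im| ≤ ‖(t : ℂ) + z‖ := by simpa using Complex.abs_im_le_norm ((t : ℂ) + z)
  rw [hfac, norm_mul, ← sq_abs, sq]
  exact mul_le_mul h₁ h₂ (abs_nonneg _) (norm_nonneg _)

theorem sq_abs_re_sub_le_norm_sq_sub_sq {t : ℝ} {z : ℂ} (ht : |t| ≤ |z.re|) :
    (|z.re| - |t|) ^ 2 ≤ ‖(t : ℂ) ^ 2 - z ^ 2‖ := by
  have hfac : (t : ℂ) ^ 2 - z ^ 2 = (t - z) * (t + z) := by ring
  have h₁ : |z.re| - |t| ≤ ‖(t : ℂ) - z‖ := by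
    have := Complex.abs_re_le_norm ((t : ℂ) - z)
    simp only [Complex.sub_re, Complex.ofReal_re] at this
    linarith [abs_sub_abs_le_abs_sub z.re t, abs_sub_comm t z.re]
  have h₂ : |z.re| - |t| ≤ ‖(t : ℂ) + z‖ := by
    have := Complex.abs_re_le_norm ((t : ℂ) + z)
    simp only [Complex.add_re, Complex.ofReal_re] at this
    have := abs_sub_abs_le_abs_sub z.re (-t)
    rw [abs_neg, sub_neg_eq_add, add_comm] at this
    linarith
  rw [hfac, norm_mul, sq]
  exact mul_le_mul h₁ h₂ (sub_nonneg.mpr ht) (norm_nonneg _)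

theorem div_add_le_norm_div {𝕜 : Type*} [NormedField 𝕜] {a b : 𝕜} {δ D : ℝ} (hδ : 0 < δ)
    (ha : δ ≤ ‖a‖) (hab : ‖b - a‖ ≤ D) (hb : b ≠ 0) : δ / (δ + D) ≤ ‖a / b‖ := by
  have hD : 0 ≤ D := (norm_nonneg _).trans hab
  have hb' : ‖b‖ ≤ ‖a‖ + D := by
    calc ‖b‖ = ‖a + (b - a)‖ := by rw [add_sub_cancel]
      _ ≤ ‖a‖ + D := (norm_add_le _ _).trans (by linarith)
  rw [norm_div, div_le_div_iff₀ (by linarith) (norm_pos_iff.mpr hb)]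
  nlinarith

theorem Complex.tendsto_euler_sin_prod_Icc (z : ℂ) :
    Tendsto (fun m : ℕ => π * z * ∏ n ∈ Finset.Icc 1 m, (1 - z ^ 2 / (n : ℂ) ^ 2)) atTop
      (𝓝 (Complex.sin (π * z))) := by
  refine (Complex.tendsto_euler_sin_prod z).congr fun m => ?_
  rw [← Finset.Ico_add_one_right_eq_Icc, Finset.prod_Ico_eq_prod_range]
  simp [add_comm]

theorem mul_eq_sin_mul_prod_of_tendsto {N : ℕ} {μ : ℕ → ℝ} (htail : ∀ n : ℕ, N + 1 ≤ n → μ n = n)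
    {z w : ℂ}
    (hs : Tendsto
      (fun m : ℕ => (π : ℂ) * ∏ n ∈ Finset.Icc 1 m, (((μ n : ℂ) ^ 2 - z ^ 2) / (n : ℂ) ^ 2))
      atTop (𝓝 w))
    (hz : ∀ n ∈ Finset.Icc 1 N, (n : ℂ) ^ 2 - z ^ 2 ≠ 0) :
    z * w = Complex.sin (π * z) *
      ∏ n ∈ Finset.Icc 1 N, (((μ n : ℂ) ^ 2 - z ^ 2) / ((n : ℂ) ^ 2 - z ^ 2)) := by
  set Q := ∏ n ∈ Finset.Icc 1 N, (((μ n : ℂ) ^ 2 - z ^ 2) / ((n : ℂ) ^ 2 - z ^ 2))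
  have hsplit : ∀ m ≥ N, ∏ n ∈ Finset.Icc 1 m, (((μ n : ℂ) ^ 2 - z ^ 2) / (n : ℂ) ^ 2)
      = Q * ∏ n ∈ Finset.Icc 1 m, (1 - z ^ 2 / (n : ℂ) ^ 2) := by
    intro m hm
    have hfactor : ∀ n ∈ Finset.Icc 1 m, ((μ n : ℂ) ^ 2 - z ^ 2) / (n : ℂ) ^ 2
        = (if n ≤ N then ((μ n : ℂ) ^ 2 - z ^ 2) / ((n : ℂ) ^ 2 - z ^ 2) else 1)
          * (1 - z ^ 2 / (n : ℂ) ^ 2) := by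
      intro n hn
      have hn0 : (n : ℂ) ≠ 0 := Nat.cast_ne_zero.mpr (by simp at hn; omega)
      split_ifs with hnN
      · have := hz n (by simp at hn ⊢; omega)
        field_simp
      · rw [htail n (by omega)]
        field_simp
        push_cast; ring
    have hfilter : (Finset.Icc 1 m).filter (· ≤ N) = Finset.Icc 1 N := by
      ext n; simp; omega
    rw [Finset.prod_congr rfl hfactor, Finset.prod_mul_distrib, ← Finset.prod_filter, hfilter]
  refine tendsto_nhds_unique (hs.const_mul z)
    (((Complex.tendsto_euler_sin_prod_Icc z).mul_const Q).congr' ?_)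
  filter_upwards [eventually_ge_atTop N] with m hm
  rw [hsplit m hm]
  ring

theorem prod_mul_norm_sin_le_norm_mul {N : ℕ} {μ : ℕ → ℝ} (htail : ∀ n : ℕ, N + 1 ≤ n → μ n = n)
    {R δ : ℝ} (hδ : 0 < δ) (hNR : (N : ℝ) ≤ R) (hμ : ∀ n ∈ Finset.Icc 1 N, |μ n| ≤ R) {z w : ℂ}
    (hs : Tendsto
      (fun m : ℕ => (π : ℂ) * ∏ n ∈ Finset.Icc 1 m, (((μ n : ℂ) ^ 2 - z ^ 2) / (n : ℂ) ^ 2))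
      atTop (𝓝 w))
    (hz : ∀ t : ℝ, |t| ≤ R → δ ≤ ‖(t : ℂ) ^ 2 - z ^ 2‖) :
    (∏ n ∈ Finset.Icc 1 N, δ / (δ + |(n : ℝ) ^ 2 - μ n ^ 2|)) * ‖Complex.sin (π * z)‖
      ≤ ‖z * w‖ := by
  have hden : ∀ n ∈ Finset.Icc 1 N, δ ≤ ‖(n : ℂ) ^ 2 - z ^ 2‖ := fun n hn => by
    have hnN : (n : ℝ) ≤ N := by exact_mod_cast (Finset.mem_Icc.mp hn).2
    simpa using hz n (by rw [Nat.abs_cast]; linarith)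
  have hden_ne : ∀ n ∈ Finset.Icc 1 N, (n : ℂ) ^ 2 - z ^ 2 ≠ 0 := fun n hn =>
    norm_pos_iff.mp (hδ.trans_le (hden n hn))
  rw [mul_eq_sin_mul_prod_of_tendsto htail hs hden_ne, norm_mul, mul_comm, norm_prod]
  gcongr with n hn
  refine div_add_le_norm_div hδ (hz (μ n) (hμ n hn)) (le_of_eq ?_) (hden_ne n hn)
  rw [sub_sub_sub_cancel_right, ← Complex.ofReal_natCast, ← Complex.ofReal_pow,
    ← Complex.ofReal_pow, ← Complex.ofReal_sub, Complex.norm_real, Real.norm_eq_abs]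

theorem stmt7_general (N : ℕ) (μ : ℕ → ℝ)
    (hsmall : ∀ n : ℕ, 1 ≤ n → n ≤ N → |μ n - (N + 1 / 2)| < 1 / 10)
    (htail : ∀ n : ℕ, N + 1 ≤ n → μ n = n)
    (s : ℂ → ℂ)
    -- `s(μ) = π ∏_{n=1}^∞ (μ_n² − μ²)/n²` (pointwise limit of the partial products)
    (hs : ∀ z : ℂ, Filter.Tendsto
      (fun m : ℕ => (π : ℂ) * ∏ n ∈ Finset.Icc 1 m, (((μ n : ℂ) ^ 2 - z ^ 2) / (n : ℂ) ^ 2))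
      Filter.atTop (nhds (s z))) :
    ∃ C₃ > (0 : ℝ), ∃ C₄ > (0 : ℝ),
      (∀ z : ℂ, 1 ≤ |z.im| → C₃ * Real.exp (π * |z.im|) ≤ ‖z * s z‖) ∧
      (∀ z : ℂ, (∃ m : ℕ, N + 1 ≤ m ∧ |z.re| = m + 1 / 2) → |z.im| ≤ 1 →
        C₄ ≤ ‖z * s z‖) := by
  have hμ : ∀ n ∈ Finset.Icc 1 N, |μ n| ≤ N + 3 / 5 := fun n hn => by
    have := abs_lt.mp (hsmall n (Finset.mem_Icc.mp hn).1 (Finset.mem_Icc.mp hn).2)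
    rw [abs_le]; constructor <;> linarith
  have key := fun z => prod_mul_norm_sin_le_norm_mul htail (by norm_num : (0 : ℝ) < 1 / 2)
    (by linarith : (N : ℝ) ≤ N + 3 / 5) hμ (hs z)
  set c := ∏ n ∈ Finset.Icc 1 N, (1 / 2) / (1 / 2 + |(n : ℝ) ^ 2 - μ n ^ 2|)
  have hc : 0 < c := Finset.prod_pos fun n _ => by positivity
  have hexp : Real.exp (-(2 * π)) < 1 := Real.exp_lt_one_iff.mpr (by linarith [Real.pi_pos])
  refine ⟨c * ((1 - Real.exp (-(2 * π))) / 2), mul_pos hc (by linarith), c, hc, ?_, ?_⟩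
  · intro z hz
    calc c * ((1 - Real.exp (-(2 * π))) / 2) * Real.exp (π * |z.im|)
        ≤ c * ‖Complex.sin (π * z)‖ := by
          rw [mul_assoc]; gcongr; exact one_sub_exp_mul_exp_le_norm_sin_pi_mul hz
      _ ≤ ‖z * s z‖ := key z fun t _ => by nlinarith [sq_im_le_norm_sq_sub_sq t z, sq_abs z.im]
  · rintro z ⟨m, hm, hre⟩ -
    have hm' : (N : ℝ) + 1 ≤ m := by exact_mod_cast hm
    calc c = c * 1 := (mul_one c).symm
      _ ≤ c * ‖Complex.sin (π * z)‖ := by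
          gcongr
          simpa [abs_sin_pi_mul_of_abs_eq m hre] using Complex.abs_sin_re_le_norm_sin (π * z)
      _ ≤ ‖z * s z‖ := key z fun t ht => by
          nlinarith [sq_abs_re_sub_le_norm_sq_sub_sq (z := z) (t := t) (by linarith)]

theorem stmt7 (N : ℕ) (hN : 1 ≤ N) (μ : ℕ → ℝ)
    (hpos : ∀ n : ℕ, 1 ≤ n → 0 < μ n)
    (hmono : ∀ m n : ℕ, 1 ≤ m → m < n → μ m < μ n)
    (hsmall : ∀ n : ℕ, 1 ≤ n → n ≤ N → |μ n - (N + 1 / 2)| < 1 / 10)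
    (htail : ∀ n : ℕ, N + 1 ≤ n → μ n = n)
    (s : ℂ → ℂ)
    -- `s(μ) = π ∏_{n=1}^∞ (μ_n² − μ²)/n²` (pointwise limit of the partial products)
    (hs : ∀ z : ℂ, Filter.Tendsto
      (fun m : ℕ => (π : ℂ) * ∏ n ∈ Finset.Icc 1 m, (((μ n : ℂ) ^ 2 - z ^ 2) / (n : ℂ) ^ 2))
      Filter.atTop (nhds (s z))) :
    ∃ C₃ > (0 : ℝ), ∃ C₄ > (0 : ℝ),
      (∀ z : ℂ, 1 ≤ |z.im| → C₃ * Real.exp (π * |z.im|) ≤ ‖z * s z‖) ∧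
      (∀ z : ℂ, (∃ m : ℕ, N + 1 ≤ m ∧ |z.re| = m + 1 / 2) → |z.im| ≤ 1 →
        C₄ ≤ ‖z * s z‖) :=
  stmt7_general N μ hsmall htail s hs
end

section
/- Let (r_n)_{n≥1} be a sequence of complex numbers with Σ_{n=1}^∞ |r_n|² < ∞ and set μ_n = n + r_n. Then there exists a constant c such that for every μ ∈ ℂ with Re μ ≥ 0 and |μ − n| ≥ 1/2 for all positive integers n, one has Σ_{n=1}^∞ |μ_n² − n²| / |n² − μ²| ≤ c. -/
open Real Set

/-!
Factor `n² - z² = (z - n)(z + n)`. Since `Re z ≥ 0`, `|z + n|` dominates both `|z - n|` and `n`,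
while `|μ_n² - n²| ≤ |r_n|² + 2n|r_n|`; with `a = |z - n| ≥ 1/2` and AM–GM on `2|r_n|/a`, the
`n`-th term is at most `5|r_n|² + 1/a² ≤ 5|r_n|² + 8/(1 + (n - Re z)²)`. The last sum is bounded
uniformly in `x = Re z`: shifting the summation over `ℤ` by the integer nearest to `x` compares it
with `2 ∑ 1/(1 + k²)`.
-/

lemma summable_one_div_one_add_sq_int : Summable fun k : ℤ => 1 / (1 + (k : ℝ) ^ 2) := by
  refine (summable_one_div_int_pow.2 one_lt_two).of_norm_bounded_eventually ?_
  filter_upwards [Filter.eventually_cofinite_ne 0] with k hk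
  have hk2 : (0 : ℝ) < (k : ℝ) ^ 2 := by positivity
  rw [Real.norm_of_nonneg (by positivity)]
  gcongr
  linarith

lemma one_div_one_add_sq_sub_le (x : ℝ) (k : ℤ) :
    1 / (1 + (k - x) ^ 2) ≤ 2 * (1 / (1 + ((k - round x : ℤ) : ℝ) ^ 2)) := by
  have hx : (x - round x) ^ 2 ≤ 1 / 4 := by
    nlinarith [sq_abs (x - round x), abs_nonneg (x - round x), abs_sub_round x]
  rw [mul_one_div, div_le_div_iff₀ (by positivity) (by positivity)]
  push_cast
  nlinarith [sq_nonneg (k - x - (x - round x))]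

lemma summable_one_div_one_add_sq_sub (x : ℝ) : Summable fun k : ℤ => 1 / (1 + (k - x) ^ 2) :=
  .of_nonneg_of_le (fun _ => by positivity) (one_div_one_add_sq_sub_le x)
    (((Equiv.subRight (round x)).summable_iff.2 summable_one_div_one_add_sq_int).mul_left 2)

lemma tsum_one_div_one_add_sq_sub_le (x : ℝ) :
    ∑' k : ℤ, 1 / (1 + (k - x) ^ 2) ≤ 2 * ∑' k : ℤ, 1 / (1 + (k : ℝ) ^ 2) := by
  have hshift := (Equiv.subRight (round x)).summable_iff.2 summable_one_div_one_add_sq_int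
  calc ∑' k : ℤ, 1 / (1 + (k - x) ^ 2)
      ≤ ∑' k : ℤ, 2 * (1 / (1 + ((k - round x : ℤ) : ℝ) ^ 2)) :=
        (summable_one_div_one_add_sq_sub x).tsum_le_tsum (one_div_one_add_sq_sub_le x)
          (hshift.mul_left 2)
    _ = 2 * ∑' k : ℤ, 1 / (1 + (k : ℝ) ^ 2) := by
        rw [tsum_mul_left]
        congr 1
        exact (Equiv.subRight (round x)).tsum_eq fun k : ℤ => 1 / (1 + (k : ℝ) ^ 2)

lemma norm_add_sq_sub_sq_le {R : Type*} [NormedCommRing R] (w r : R) :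
    ‖(w + r) ^ 2 - w ^ 2‖ ≤ ‖r‖ ^ 2 + 2 * ‖w‖ * ‖r‖ := by
  calc ‖(w + r) ^ 2 - w ^ 2‖ = ‖r * (r + w + w)‖ := by ring_nf
    _ ≤ ‖r‖ * (‖r‖ + ‖w‖ + ‖w‖) := by
        grw [norm_mul_le, norm_add₃_le]
    _ = ‖r‖ ^ 2 + 2 * ‖w‖ * ‖r‖ := by ring

lemma add_two_mul_div_mul_le {ρ a b w : ℝ} (hρ : 0 ≤ ρ) (ha : 1 / 2 ≤ a) (hab : a ≤ b)
    (hwb : w ≤ b) : (ρ ^ 2 + 2 * w * ρ) / (a * b) ≤ 5 * ρ ^ 2 + 1 / a ^ 2 := by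
  have ha0 : 0 < a := by linarith
  have hb0 : 0 < b := by linarith
  have h4 : 1 / a ^ 2 ≤ 4 := by
    rw [div_le_iff₀ (by positivity)]; nlinarith
  calc (ρ ^ 2 + 2 * w * ρ) / (a * b) = ρ ^ 2 / (a * b) + 2 * ρ * (w / b) / a := by
        field_simp
    _ ≤ ρ ^ 2 / a ^ 2 + 2 * ρ * 1 / a := by
        gcongr
        · nlinarith
        · exact (div_le_one hb0).2 hwb
    _ = ρ ^ 2 * (1 / a ^ 2) + 2 * ρ * (1 / a) := by ring
    _ ≤ ρ ^ 2 * 4 + (ρ ^ 2 + (1 / a) ^ 2) := by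
        gcongr
        nlinarith [sq_nonneg (ρ - 1 / a)]
    _ = 5 * ρ ^ 2 + 1 / a ^ 2 := by ring

lemma one_div_sq_le_of_abs_le {a t : ℝ} (ha : 1 / 2 ≤ a) (hta : |t| ≤ a) :
    1 / a ^ 2 ≤ 8 / (1 + t ^ 2) := by
  have ht : t ^ 2 ≤ a ^ 2 := sq_le_sq' (abs_le.1 hta).1 (abs_le.1 hta).2
  rw [div_le_div_iff₀ (by nlinarith) (by positivity)]
  nlinarith

lemma norm_sub_ofReal_le_norm_add_ofReal {z : ℂ} {w : ℝ} (hz : 0 ≤ z.re) (hw : 0 ≤ w) :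
    ‖z - w‖ ≤ ‖z + w‖ := by
  rw [← sq_le_sq₀ (norm_nonneg _) (norm_nonneg _), Complex.sq_norm, Complex.sq_norm,
    Complex.normSq_apply, Complex.normSq_apply]
  simp only [Complex.sub_re, Complex.add_re, Complex.ofReal_re, Complex.sub_im, Complex.add_im,
    Complex.ofReal_im, sub_zero, add_zero]
  nlinarith [mul_nonneg hz hw]

lemma le_norm_add_ofReal {z : ℂ} {w : ℝ} (hz : 0 ≤ z.re) : w ≤ ‖z + w‖ := by
  have := Complex.re_le_norm (z + w)
  simp only [Complex.add_re, Complex.ofReal_re] at this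
  linarith

lemma norm_add_sq_sub_sq_div_le (r z : ℂ) {w : ℝ} (hw : 0 ≤ w) (hz : 0 ≤ z.re)
    (hzw : 1 / 2 ≤ ‖z - w‖) :
    ‖((w : ℂ) + r) ^ 2 - (w : ℂ) ^ 2‖ / ‖(w : ℂ) ^ 2 - z ^ 2‖
      ≤ 5 * ‖r‖ ^ 2 + 8 / (1 + (w - z.re) ^ 2) := by
  have hden : ‖(w : ℂ) ^ 2 - z ^ 2‖ = ‖z - w‖ * ‖z + w‖ := by
    rw [← norm_mul, ← norm_neg]; ring_nf
  have hre : |w - z.re| ≤ ‖z - w‖ := by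
    simpa [abs_sub_comm] using Complex.abs_re_le_norm (z - w)
  calc ‖((w : ℂ) + r) ^ 2 - (w : ℂ) ^ 2‖ / ‖(w : ℂ) ^ 2 - z ^ 2‖
      ≤ (‖r‖ ^ 2 + 2 * w * ‖r‖) / (‖z - w‖ * ‖z + w‖) := by
        rw [hden]
        gcongr
        simpa [Complex.norm_real, abs_of_nonneg hw] using norm_add_sq_sub_sq_le (w : ℂ) r
    _ ≤ 5 * ‖r‖ ^ 2 + 1 / ‖z - w‖ ^ 2 :=
        add_two_mul_div_mul_le (norm_nonneg r) hzw (norm_sub_ofReal_le_norm_add_ofReal hz hw)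
          (le_norm_add_ofReal hz)
    _ ≤ 5 * ‖r‖ ^ 2 + 8 / (1 + (w - z.re) ^ 2) := by
        grw [one_div_sq_le_of_abs_le hzw hre]

/-- Here `r n` plays the role of `r_{n+1}` and `μ_{n+1} = (n+1) + r n`. -/
theorem stmt11 (r : ℕ → ℂ) (hr : Summable (fun n : ℕ => ‖r n‖ ^ 2)) :
    ∃ c : ℝ, ∀ z : ℂ, 0 ≤ z.re →
      (∀ n : ℕ, (1 : ℝ) / 2 ≤ ‖z - ((n : ℂ) + 1)‖) →
      Summable (fun n : ℕ =>
        ‖(((n : ℂ) + 1) + r n) ^ 2 - ((n : ℂ) + 1) ^ 2‖ / ‖((n : ℂ) + 1) ^ 2 - z ^ 2‖) ∧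
      ∑' n : ℕ,
        ‖(((n : ℂ) + 1) + r n) ^ 2 - ((n : ℂ) + 1) ^ 2‖ / ‖((n : ℂ) + 1) ^ 2 - z ^ 2‖ ≤ c := by
  refine ⟨5 * ∑' n, ‖r n‖ ^ 2 + 16 * ∑' k : ℤ, 1 / (1 + (k : ℝ) ^ 2), fun z hz hsep => ?_⟩
  have hsucc : Function.Injective fun n : ℕ => ((n + 1 : ℕ) : ℤ) := by
    intro m n h; simpa using h
  have hlattice := (summable_one_div_one_add_sq_sub z.re).comp_injective hsucc
  have hlattice_le := (tsum_comp_le_tsum_of_inj (summable_one_div_one_add_sq_sub z.re)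
    (fun _ => by positivity) hsucc).trans (tsum_one_div_one_add_sq_sub_le z.re)
  simp only [Function.comp_def, Nat.cast_add, Nat.cast_one, Int.cast_add, Int.cast_natCast,
    Int.cast_one] at hlattice hlattice_le
  have hmajorant := (hr.mul_left 5).add (hlattice.mul_left 8)
  have hterm : ∀ n : ℕ,
      ‖(((n : ℂ) + 1) + r n) ^ 2 - ((n : ℂ) + 1) ^ 2‖ / ‖((n : ℂ) + 1) ^ 2 - z ^ 2‖
        ≤ 5 * ‖r n‖ ^ 2 + 8 * (1 / (1 + ((n : ℝ) + 1 - z.re) ^ 2)) := fun n => by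
    have := norm_add_sq_sub_sq_div_le (r n) z (w := (n : ℝ) + 1) (by positivity) hz
      (by exact_mod_cast hsep n)
    push_cast at this
    rwa [mul_one_div]
  have hsum := hmajorant.of_nonneg_of_le (fun _ => by positivity) hterm
  refine ⟨hsum, ?_⟩
  calc _ ≤ _ := hsum.tsum_le_tsum hterm hmajorant
    _ = 5 * ∑' n, ‖r n‖ ^ 2 + 8 * ∑' n : ℕ, 1 / (1 + ((n : ℝ) + 1 - z.re) ^ 2) := by
        rw [(hr.mul_left 5).tsum_add (hlattice.mul_left 8), tsum_mul_left, tsum_mul_left]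
    _ ≤ _ := by linarith
end
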